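/- Let Δ be a simplicial complex with at least two facets and let F be a leaf of Δ. Then F is a splitting facet of Δ; that is, I(Δ) = (F) + I(Δ∖F) is a splitting of I(Δ). -/

import Mathlib

open MvPolynomial

variable {V : Type*}

/-- The facet ideal of the simplicial complex with facet set `Δ`. -/
noncomputable def facetIdeal (k : Type*) [Field k] [DecidableEq V]
    (Δ : Set (Finset V)) : Ideal (MvPolynomial V k) :=
  Ideal.span ((fun F : Finset V => ∏ x ∈ F, X x) '' Δ)

/-- A facet `F` of `Δ` is a leaf if either `F` is the only facet, or there is
a facet `G ≠ F` with `F ∩ F' ⊆ F ∩ G` for every facet `F' ≠ F`. -/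
def IsLeaf [DecidableEq V] (Δ : Set (Finset V)) (F : Finset V) : Prop :=
  F ∈ Δ ∧ (Δ = {F} ∨ ∃ G ∈ Δ, G ≠ F ∧ ∀ F' ∈ Δ, F' ≠ F → F ∩ F' ⊆ F ∩ G)

/-- A (monic) monomial in a multivariate polynomial ring. -/
def IsMonomial {k : Type*} [Field k] (m : MvPolynomial V k) : Prop :=
  ∃ s : V →₀ ℕ, m = monomial s 1

/-- A monomial ideal: an ideal generated by a set of (monic) monomials. -/
def IsMonomialIdeal {k : Type*} [Field k] (I : Ideal (MvPolynomial V k)) : Prop :=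
  ∃ S : Set (MvPolynomial V k), (∀ m ∈ S, IsMonomial m) ∧ I = Ideal.span S

/-- The set of minimal (monic) monomial generators of a monomial ideal `I`. -/
def minGens {k : Type*} [Field k] (I : Ideal (MvPolynomial V k)) :
    Set (MvPolynomial V k) :=
  {m | IsMonomial m ∧ m ∈ I ∧
    ∀ m' : MvPolynomial V k, IsMonomial m' → m' ∣ m → m' ≠ m → m' ∉ I}

/-- `L` is the (monic) least common multiple of the set of monomials `S`. -/
def IsLcmOf {k : Type*} [Field k] (S : Set (MvPolynomial V k))
    (L : MvPolynomial V k) : Prop :=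
  IsMonomial L ∧ (∀ m ∈ S, m ∣ L) ∧
    ∀ L' : MvPolynomial V k, IsMonomial L' → (∀ m ∈ S, m ∣ L') → L ∣ L'

/-- Eliahou–Kervaire splitting of a monomial ideal. -/
def IsSplitting {k : Type*} [Field k] (I J K : Ideal (MvPolynomial V k)) : Prop :=
  IsMonomialIdeal J ∧ IsMonomialIdeal K ∧ J ≠ ⊥ ∧ K ≠ ⊥ ∧ I = J + K ∧
  minGens I = minGens J ∪ minGens K ∧ Disjoint (minGens J) (minGens K) ∧
  ∃ φ ψ : MvPolynomial V k → MvPolynomial V k,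
    (∀ w ∈ minGens (J ⊓ K), φ w ∈ minGens J ∧ ψ w ∈ minGens K ∧
        IsLcmOf {φ w, ψ w} w) ∧
    (∀ S ⊆ minGens (J ⊓ K), S.Nonempty →
      ∀ L Lφ Lψ : MvPolynomial V k, IsLcmOf S L → IsLcmOf (φ '' S) Lφ →
        IsLcmOf (ψ '' S) Lψ → (Lφ ∣ L ∧ Lφ ≠ L) ∧ (Lψ ∣ L ∧ Lψ ≠ L))

/-!
A leaf `F` of a complex with at least two facets has a free vertex `x`, one lying in no other
facet: if `G` is the facet with `F ∩ F' ⊆ F ∩ G` for all `F' ≠ F`, any `x ∈ F \ G` will do.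
The minimal generators of `(x_F) ∩ I(Δ ∖ F)` are among the monomials `x_{F ∪ G}` with
`G ∈ Δ ∖ F`, and `x_{F ∪ G}` is split as `(x_F, x_G)`. For a nonempty set of such generators,
the lcm of the first components misses a vertex of some `G ⊄ F`, and the lcm of the second
components misses `x`; the lcm of the generators themselves contains both.
-/

section FacetMonomial

variable {k : Type*} [Field k]

noncomputable def facetExp (A : Finset V) : V →₀ ℕ := ∑ x ∈ A, Finsupp.single x 1

lemma facetExp_apply [DecidableEq V] (A : Finset V) (x : V) :
    facetExp A x = if x ∈ A then 1 else 0 := by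
  simp [facetExp, Finsupp.finsetSum_apply, Finsupp.single_apply]

lemma facetExp_le_iff {A : Finset V} {s : V →₀ ℕ} : facetExp A ≤ s ↔ A ⊆ s.support := by
  classical
  simp only [Finsupp.le_def, facetExp_apply, Finset.subset_iff, Finsupp.mem_support_iff]
  refine ⟨fun h x hx => ?_, fun h x => ?_⟩
  · simpa [hx, Nat.one_le_iff_ne_zero] using h x
  · split_ifs with hx
    · exact Nat.one_le_iff_ne_zero.mpr (h hx)
    · exact Nat.zero_le _

lemma support_facetExp (A : Finset V) : (facetExp A).support = A := by
  classical
  ext x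
  simp [Finsupp.mem_support_iff, facetExp_apply]

variable (k) in
noncomputable abbrev facetMonomial (A : Finset V) : MvPolynomial V k := ∏ x ∈ A, X x

lemma facetMonomial_eq_monomial (A : Finset V) :
    facetMonomial k A = monomial (facetExp A) 1 :=
  (monomial_sum_one A _).symm

lemma facetMonomial_dvd_monomial_one {A : Finset V} {s : V →₀ ℕ} :
    facetMonomial k A ∣ monomial s 1 ↔ A ⊆ s.support := by
  rw [facetMonomial_eq_monomial, monomial_one_dvd_monomial_one, facetExp_le_iff]

lemma facetMonomial_dvd_facetMonomial {A B : Finset V} :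
    facetMonomial k A ∣ facetMonomial k B ↔ A ⊆ B := by
  rw [facetMonomial_eq_monomial B, facetMonomial_dvd_monomial_one, support_facetExp]

lemma facetMonomial_injective : Function.Injective (facetMonomial k : Finset V → _) :=
  fun _ _ h => (facetMonomial_dvd_facetMonomial.mp h.dvd).antisymm
    (facetMonomial_dvd_facetMonomial.mp h.symm.dvd)

lemma isMonomial_facetMonomial (A : Finset V) : IsMonomial (facetMonomial k A) :=
  ⟨_, facetMonomial_eq_monomial A⟩

lemma isLcmOf_facetMonomial_pair [DecidableEq V] (A B : Finset V) :
    IsLcmOf {facetMonomial k A, facetMonomial k B} (facetMonomial k (A ∪ B)) := by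
  refine ⟨isMonomial_facetMonomial _, ?_, ?_⟩
  · rintro m (rfl | rfl)
    exacts [facetMonomial_dvd_facetMonomial.mpr Finset.subset_union_left,
      facetMonomial_dvd_facetMonomial.mpr Finset.subset_union_right]
  · rintro L ⟨t, rfl⟩ hdvd
    simp only [Set.mem_insert_iff, Set.mem_singleton_iff, forall_eq_or_imp, forall_eq,
      facetMonomial_dvd_monomial_one] at hdvd
    exact facetMonomial_dvd_monomial_one.mpr (Finset.union_subset hdvd.1 hdvd.2)

end FacetMonomial

section FacetIdeal

variable {k : Type*} [Field k] [DecidableEq V]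

lemma mem_facetIdeal {Δ : Set (Finset V)} {p : MvPolynomial V k} :
    p ∈ facetIdeal k Δ ↔ ∀ s ∈ p.support, ∃ G ∈ Δ, G ⊆ s.support := by
  rw [facetIdeal, Set.image_congr fun G _ => facetMonomial_eq_monomial (k := k) G,
    ← Set.image_image (fun s => monomial s (1 : k)), mem_ideal_span_monomial_image]
  simp [facetExp_le_iff]

lemma monomial_one_mem_facetIdeal {Δ : Set (Finset V)} {s : V →₀ ℕ} :
    monomial s (1 : k) ∈ facetIdeal k Δ ↔ ∃ G ∈ Δ, G ⊆ s.support := by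
  simp [mem_facetIdeal]

lemma facetMonomial_mem_facetIdeal {Δ : Set (Finset V)} {G : Finset V} (hG : G ∈ Δ) :
    facetMonomial k G ∈ facetIdeal k Δ :=
  Ideal.subset_span ⟨G, hG, rfl⟩

lemma isMonomialIdeal_facetIdeal (Δ : Set (Finset V)) : IsMonomialIdeal (facetIdeal k Δ) :=
  ⟨_, by rintro m ⟨G, -, rfl⟩; exact isMonomial_facetMonomial G, rfl⟩

lemma facetIdeal_ne_bot {Δ : Set (Finset V)} (hΔ : Δ.Nonempty) : facetIdeal k Δ ≠ ⊥ := by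
  obtain ⟨G, hG⟩ := hΔ
  refine fun h => ?_
  have hmem := facetMonomial_mem_facetIdeal (k := k) hG
  rw [h, Ideal.mem_bot, facetMonomial_eq_monomial, monomial_eq_zero] at hmem
  exact one_ne_zero hmem

lemma facetIdeal_union (Δ₁ Δ₂ : Set (Finset V)) :
    facetIdeal k (Δ₁ ∪ Δ₂) = facetIdeal k Δ₁ + facetIdeal k Δ₂ := by
  rw [facetIdeal, Set.image_union, Ideal.span_union]
  rfl

lemma facetIdeal_singleton_inf (F : Finset V) (Δ : Set (Finset V)) :
    facetIdeal k {F} ⊓ facetIdeal k Δ = facetIdeal k ((F ∪ ·) '' Δ) := by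
  ext p
  simp only [Submodule.mem_inf, mem_facetIdeal, Set.mem_singleton_iff, exists_eq_left,
    Set.mem_image, exists_exists_and_eq_and, Finset.union_subset_iff]
  exact ⟨fun h s hs => (h.2 s hs).imp fun G hG => ⟨hG.1, h.1 s hs, hG.2⟩,
    fun h => ⟨fun s hs => (h s hs).choose_spec.2.1,
      fun s hs => (h s hs).imp fun G hG => ⟨hG.1, hG.2.2⟩⟩⟩

lemma minGens_facetIdeal_subset (Δ : Set (Finset V)) :
    minGens (facetIdeal k Δ) ⊆ facetMonomial k '' Δ := by
  rintro w ⟨⟨s, rfl⟩, hmem, hmin⟩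
  obtain ⟨G, hG, hGs⟩ := monomial_one_mem_facetIdeal.mp hmem
  by_contra hne
  exact hmin _ (isMonomial_facetMonomial G) (facetMonomial_dvd_monomial_one.mpr hGs)
    (fun h => hne ⟨G, hG, h⟩) (facetMonomial_mem_facetIdeal hG)

lemma minGens_facetIdeal {Δ : Set (Finset V)} (hac : IsAntichain (· ⊆ ·) Δ) :
    minGens (facetIdeal k Δ) = facetMonomial k '' Δ := by
  refine (minGens_facetIdeal_subset Δ).antisymm ?_
  rintro _ ⟨G, hG, rfl⟩
  refine ⟨isMonomial_facetMonomial G, facetMonomial_mem_facetIdeal hG, ?_⟩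
  rintro _ ⟨t, rfl⟩ hdvd hne hmem
  rw [facetMonomial_eq_monomial, monomial_one_dvd_monomial_one] at hdvd
  obtain ⟨G', hG', hG't⟩ := monomial_one_mem_facetIdeal.mp hmem
  have htG : t.support ⊆ G := support_facetExp G ▸ Finsupp.support_mono hdvd
  obtain rfl : G' = G := hac.eq hG' hG (hG't.trans htG)
  exact hne (by rw [facetMonomial_eq_monomial, le_antisymm hdvd (facetExp_le_iff.mpr hG't)])

end FacetIdeal

section Lcm

variable {k : Type*} [Field k]

lemma IsLcmOf.not_X_dvd {S : Set (MvPolynomial V k)} {L : MvPolynomial V k} {x : V}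
    (hL : IsLcmOf S L) (hS : ∀ m ∈ S, ∃ A : Finset V, x ∉ A ∧ m = facetMonomial k A) :
    ¬ X x ∣ L := by
  classical
  obtain ⟨t, rfl⟩ := hL.1
  have hdvd : monomial t (1 : k) ∣ monomial (t.erase x) 1 := by
    refine hL.2.2 _ ⟨_, rfl⟩ fun m hm => ?_
    obtain ⟨A, hxA, rfl⟩ := hS m hm
    have hAt := facetMonomial_dvd_monomial_one.mp (hL.2.1 _ hm)
    rw [facetMonomial_dvd_monomial_one, Finsupp.support_erase]
    exact Finset.subset_erase.mpr ⟨hAt, hxA⟩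
  simpa [X_dvd_monomial] using monomial_one_dvd_monomial_one.mp hdvd x

lemma IsLcmOf.dvd_ne_of_X_dvd {S T : Set (MvPolynomial V k)} {L L' : MvPolynomial V k} {x : V}
    (hL : IsLcmOf S L) (hL' : IsLcmOf T L') (hTL : ∀ m ∈ T, m ∣ L)
    (hT : ∀ m ∈ T, ∃ A : Finset V, x ∉ A ∧ m = facetMonomial k A)
    (hS : ∃ m ∈ S, X x ∣ m) : L' ∣ L ∧ L' ≠ L := by
  obtain ⟨m, hm, hxm⟩ := hS
  refine ⟨hL'.2.2 L hL.1 hTL, fun h => hL'.not_X_dvd hT ?_⟩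
  exact h ▸ hxm.trans (hL.2.1 m hm)

end Lcm

lemma IsLeaf.exists_free_vertex [DecidableEq V] {Δ : Set (Finset V)} {F : Finset V}
    (hleaf : IsLeaf Δ F) (hac : IsAntichain (· ⊆ ·) Δ) (hG : ∃ G ∈ Δ, G ≠ F) :
    ∃ x ∈ F, ∀ G ∈ Δ, G ≠ F → x ∉ G := by
  obtain ⟨hF, rfl | ⟨G₀, hG₀, hG₀F, hmax⟩⟩ := hleaf
  · obtain ⟨G, hG, hGF⟩ := hG
    exact absurd hG hGF
  obtain ⟨x, hxF, hxG₀⟩ := Finset.not_subset.mp fun h => hac hF hG₀ hG₀F.symm h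
  exact ⟨x, hxF, fun G hG hGF hxG =>
    hxG₀ (Finset.mem_inter.mp (hmax G hG hGF (Finset.mem_inter.mpr ⟨hxF, hxG⟩))).2⟩

section Splitting

variable {k : Type*} [Field k] [DecidableEq V]

variable (k) in
/-- Some `G ∈ Δ` with `w = x_{F ∪ G}` if there is one (a junk value otherwise). -/
noncomputable def splitPartner (F : Finset V) (Δ : Set (Finset V)) (w : MvPolynomial V k) :
    Finset V :=
  Function.invFunOn (fun G => facetMonomial k (F ∪ G)) Δ w

lemma splitPartner_spec {F : Finset V} {Δ : Set (Finset V)} {w : MvPolynomial V k}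
    (hw : w ∈ minGens (facetIdeal k {F} ⊓ facetIdeal k Δ)) :
    splitPartner k F Δ w ∈ Δ ∧ w = facetMonomial k (F ∪ splitPartner k F Δ w) := by
  rw [facetIdeal_singleton_inf] at hw
  have hw' : ∃ G ∈ Δ, facetMonomial k (F ∪ G) = w := by
    simpa using minGens_facetIdeal_subset _ hw
  exact ⟨Function.invFunOn_mem hw', (Function.invFunOn_eq hw').symm⟩

lemma lcm_splitPartner_strict {Δ : Set (Finset V)} {F : Finset V} {x : V}
    (hac : IsAntichain (· ⊆ ·) Δ) (hF : F ∈ Δ) (hxF : x ∈ F)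
    (hfree : ∀ G ∈ Δ, G ≠ F → x ∉ G) {S : Set (MvPolynomial V k)}
    (hS : S ⊆ minGens (facetIdeal k {F} ⊓ facetIdeal k (Δ \ {F}))) (hSne : S.Nonempty)
    {L Lφ Lψ : MvPolynomial V k} (hL : IsLcmOf S L)
    (hLφ : IsLcmOf ((fun _ => facetMonomial k F) '' S) Lφ)
    (hLψ : IsLcmOf ((fun w => facetMonomial k (splitPartner k F (Δ \ {F}) w)) '' S) Lψ) :
    (Lφ ∣ L ∧ Lφ ≠ L) ∧ (Lψ ∣ L ∧ Lψ ≠ L) := by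
  obtain ⟨w₀, hw₀⟩ := hSne
  obtain ⟨⟨hG₀, hG₀F⟩, hw₀eq⟩ := splitPartner_spec (hS hw₀)
  set G₀ := splitPartner k F (Δ \ {F}) w₀
  have hw₀L : facetMonomial k (F ∪ G₀) ∣ L := hw₀eq ▸ hL.2.1 w₀ hw₀
  obtain ⟨y, hyG₀, hyF⟩ := Finset.not_subset.mp fun h => hac hG₀ hF hG₀F h
  constructor
  · refine hL.dvd_ne_of_X_dvd (x := y) hLφ ?_ ?_ ⟨w₀, hw₀, ?_⟩
    · rintro _ ⟨w, -, rfl⟩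
      exact (facetMonomial_dvd_facetMonomial.mpr Finset.subset_union_left).trans hw₀L
    · rintro _ ⟨w, -, rfl⟩
      exact ⟨F, hyF, rfl⟩
    · exact hw₀eq ▸ Finset.dvd_prod_of_mem _ (Finset.mem_union_right F hyG₀)
  · refine hL.dvd_ne_of_X_dvd (x := x) hLψ ?_ ?_ ⟨w₀, hw₀, ?_⟩
    · rintro _ ⟨w, hw, rfl⟩
      have hwL : w ∣ L := hL.2.1 w hw
      rw [(splitPartner_spec (hS hw)).2] at hwL
      exact (facetMonomial_dvd_facetMonomial.mpr Finset.subset_union_right).trans hwL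
    · rintro _ ⟨w, hw, rfl⟩
      obtain ⟨⟨hG, hGF⟩, -⟩ := splitPartner_spec (hS hw)
      exact ⟨_, hfree _ hG hGF, rfl⟩
    · exact hw₀eq ▸ Finset.dvd_prod_of_mem _ (Finset.mem_union_left G₀ hxF)


theorem isSplitting_facetIdeal_of_free_vertex {Δ : Set (Finset V)} {F : Finset V} {x : V}
    (hac : IsAntichain (· ⊆ ·) Δ) (hF : F ∈ Δ) (hxF : x ∈ F)
    (hfree : ∀ G ∈ Δ, G ≠ F → x ∉ G) (hG : ∃ G ∈ Δ, G ≠ F) :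
    IsSplitting (facetIdeal k Δ) (facetIdeal k {F}) (facetIdeal k (Δ \ {F})) := by
  have hunion : {F} ∪ Δ \ {F} = Δ := Set.union_sdiff_cancel (Set.singleton_subset_iff.mpr hF)
  have hacF : IsAntichain (· ⊆ ·) ({F} : Set (Finset V)) :=
    Set.subsingleton_singleton.isAntichain _
  have hac' : IsAntichain (· ⊆ ·) (Δ \ {F}) := hac.subset Set.sdiff_subset
  refine ⟨isMonomialIdeal_facetIdeal _, isMonomialIdeal_facetIdeal _,
    facetIdeal_ne_bot (Set.singleton_nonempty F), facetIdeal_ne_bot hG,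
    by rw [← facetIdeal_union, hunion], ?_, ?_, fun _ => facetMonomial k F,
    fun w => facetMonomial k (splitPartner k F (Δ \ {F}) w), fun w hw => ?_, ?_⟩
  · rw [minGens_facetIdeal hac, minGens_facetIdeal hacF, minGens_facetIdeal hac',
      ← Set.image_union, hunion]
  · rw [minGens_facetIdeal hacF, minGens_facetIdeal hac',
      Set.disjoint_image_iff facetMonomial_injective]
    exact Set.disjoint_sdiff_right
  · obtain ⟨hG, hw⟩ := splitPartner_spec hw
    rw [minGens_facetIdeal hacF, minGens_facetIdeal hac']
    beta_reduce
    generalize splitPartner k F (Δ \ {F}) w = G at hG hw ⊢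
    subst hw
    exact ⟨⟨F, rfl, rfl⟩, ⟨G, hG, rfl⟩, isLcmOf_facetMonomial_pair F G⟩
  exact fun S hS hSne L Lφ Lψ hL hLφ hLψ =>
    lcm_splitPartner_strict hac hF hxF hfree hS hSne hL hLφ hLψ

end Splitting

theorem stmt10_general (k : Type*) [Field k] [DecidableEq V]
    (Δ : Set (Finset V))
    (hac : IsAntichain (· ⊆ ·) Δ)
    (htwo : ∃ A ∈ Δ, ∃ B ∈ Δ, A ≠ B)
    (F : Finset V) (hleaf : IsLeaf Δ F) :
    IsSplitting (facetIdeal k Δ)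
      (Ideal.span {(∏ x ∈ F, X x : MvPolynomial V k)})
      (facetIdeal k (Δ \ {F})) := by
  have hG : ∃ G ∈ Δ, G ≠ F := by
    obtain ⟨A, hA, B, hB, hAB⟩ := htwo
    by_cases hAF : A = F
    · exact ⟨B, hB, hAF ▸ hAB.symm⟩
    · exact ⟨A, hA, hAF⟩
  obtain ⟨x, hxF, hfree⟩ := hleaf.exists_free_vertex hac hG
  have hJ : Ideal.span {(∏ x ∈ F, X x : MvPolynomial V k)} = facetIdeal k {F} := by
    rw [facetIdeal, Set.image_singleton]
  rw [hJ]
  exact isSplitting_facetIdeal_of_free_vertex hac hleaf.1 hxF hfree hG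

/-- if `Δ` is a simplicial complex with at least two facets and
`F` is a leaf of `Δ`, then `F` is a splitting facet of `Δ`: the decomposition
`I(Δ) = (F) + I(Δ \ F)` is a splitting of `I(Δ)`. -/
theorem stmt10 (k : Type*) [Field k] [Fintype V] [DecidableEq V]
    (Δ : Set (Finset V)) (hne : ∀ F ∈ Δ, F.Nonempty)
    (hac : IsAntichain (· ⊆ ·) Δ)
    (htwo : ∃ A ∈ Δ, ∃ B ∈ Δ, A ≠ B)
    (F : Finset V) (hleaf : IsLeaf Δ F) :
    IsSplitting (facetIdeal k Δ)
      (Ideal.span {(∏ x ∈ F, X x : MvPolynomial V k)})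
      (facetIdeal k (Δ \ {F})) :=
  stmt10_general k Δ hac htwo F hleaf
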